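/- arXiv:1610.04810 — 3 statements merged into one kernel-verified Lean document; each statement's English description precedes it below -/
import Mathlib

section
/- Let m and ω be integers with 1 ≤ m and m + 1 ≤ ω. Then an integer point (x, ω − 1) ∈ ℤ² lies in the convex hull of {(0,0), (m, ω), (m+1, ω)} in ℝ² if and only if x = m. In particular, (m, ω − 1) is the unique lattice point with second coordinate ω − 1 in the closed triangle with vertices (0,0), (m, ω), (m+1, ω). -/
/-!
The triangle lies in the wedge between the rays through `(m, ω)` and `(m + 1, ω)`, whose slice at
height `ω - 1` is the interval `[m - m/ω, (m + 1) - (m + 1)/ω]`. Since `0 ≤ m < ω`, this interval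
lies strictly between `m - 1` and `m + 1` and contains `m`.
-/

theorem smul_add_smul_add_smul_mem_convexHull {E : Type*} [AddCommGroup E] [Module ℝ E]
    {x y z : E} {a b c : ℝ} (ha : 0 ≤ a) (hb : 0 ≤ b) (hc : 0 ≤ c) (habc : a + b + c = 1) :
    a • x + b • y + c • z ∈ convexHull ℝ {x, y, z} := by
  have := (convex_convexHull ℝ ({x, y, z} : Set E)).sum_mem (t := Finset.univ) (w := ![a, b, c])
    (z := ![x, y, z]) (by simp [Fin.forall_fin_succ, ha, hb, hc])
    (by simp [Fin.sum_univ_three, habc])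
    (fun i _ => subset_convexHull ℝ _ (by fin_cases i <;> simp))
  simpa [Fin.sum_univ_three] using this

theorem convexHull_triangle_subset_wedge {a b h : ℝ} (hh : 0 ≤ h) (hab : a ≤ b) :
    convexHull ℝ {(0, 0), (a, h), (b, h)} ⊆
      {z : ℝ × ℝ | z.2 * a ≤ z.1 * h ∧ z.1 * h ≤ z.2 * b} := by
  refine convexHull_min ?_ ?_
  · simp only [Set.insert_subset_iff, Set.singleton_subset_iff, Set.mem_ofPred_eq]
    refine ⟨by simp, ⟨le_of_eq (mul_comm _ _), by nlinarith⟩, by nlinarith, le_of_eq (mul_comm _ _)⟩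
  · rintro p ⟨hp₁, hp₂⟩ q ⟨hq₁, hq₂⟩ s t hs ht -
    simp only [Set.mem_ofPred_eq, Prod.fst_add, Prod.snd_add, smul_eq_mul, Prod.smul_fst,
      Prod.smul_snd]
    constructor <;> nlinarith [mul_le_mul_of_nonneg_left hp₁ hs, mul_le_mul_of_nonneg_left hq₁ ht,
      mul_le_mul_of_nonneg_left hp₂ hs, mul_le_mul_of_nonneg_left hq₂ ht]

theorem Int.eq_of_sub_one_mul_le_of_le_sub_one_mul {m ω x : ℤ} (hm : 0 ≤ m) (hω : m + 1 ≤ ω)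
    (hlo : (ω - 1) * m ≤ x * ω) (hhi : x * ω ≤ (ω - 1) * (m + 1)) : x = m := by
  rcases lt_trichotomy x m with hlt | heq | hgt
  · nlinarith
  · exact heq
  · nlinarith

/-- For integers `1 ≤ m` and `m + 1 ≤ ω`, an integer point
`(x, ω − 1)` lies in the convex hull of `{(0,0), (m, ω), (m+1, ω)}` in `ℝ²`
if and only if `x = m`. -/
theorem unique_lattice_point_at_height (m ω : ℤ) (hm : 1 ≤ m) (hω : m + 1 ≤ ω)
    (x : ℤ) :
    ((x : ℝ), ((ω - 1 : ℤ) : ℝ)) ∈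
        convexHull ℝ
          ({(0, 0), ((m : ℝ), (ω : ℝ)), (((m + 1 : ℤ) : ℝ), (ω : ℝ))} : Set (ℝ × ℝ)) ↔
      x = m := by
  have hω₀ : (0 : ℝ) < ω := by exact_mod_cast (by omega : (0 : ℤ) < ω)
  constructor
  · intro hx
    obtain ⟨hlo, hhi⟩ := convexHull_triangle_subset_wedge hω₀.le
      (by exact_mod_cast (by omega : m ≤ m + 1)) hx
    dsimp only at hlo hhi
    exact Int.eq_of_sub_one_mul_le_of_le_sub_one_mul (by omega) hω
      (by exact_mod_cast hlo) (by exact_mod_cast hhi)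
  · rintro rfl
    have hb : (0 : ℝ) ≤ ω - 1 - x := by exact_mod_cast (by omega : (0 : ℤ) ≤ ω - 1 - x)
    have hc : (0 : ℝ) ≤ x := by exact_mod_cast (by omega : (0 : ℤ) ≤ x)
    convert smul_add_smul_add_smul_mem_convexHull (x := ((0 : ℝ), (0 : ℝ)))
      (a := 1 / ω) (b := (ω - 1 - x) / ω) (c := x / ω) (by positivity)
      (div_nonneg hb hω₀.le) (div_nonneg hc hω₀.le) (by field_simp; ring) using 1
    ext <;> simp only [Prod.fst_add, Prod.snd_add, Prod.smul_fst, Prod.smul_snd, smul_eq_mul] <;>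
      push_cast <;> field_simp <;> ring
end

section
/- Let a, b, c, d, k, m, ω be positive integers satisfying: d·a − b·c = 1; c + d = m + 1; a + b = ω + 1; k·c = m; k·a = ω − 1; and (m+1)·b − ω·d = 1. Then a = 3, b = 5, c = 1, d = 2, k = 2, m = 2, and ω = 7. -/
/-!
Congruence (a) expresses `(m + 1, ω)` as `k • (c, a) + (1, 1)`, so against the Farey frame
`da - bc = 1` the determinant in (b) becomes `b - d - k`, giving `b - d = k + 1`. The mediant
relation rewrites `d` and `b` as `(k - 1) c + 1` and `(k - 1) a + 2`; then `da - bc = 1` forces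
`a = 2c + 1`, and `b - d = k + 1` becomes `(k - 1) c = 1`. Hence `c = 1`, `k = 2`, and everything
else follows.
-/

theorem det_smul_add_one_of_det_eq_one {R : Type*} [CommRing R] {a b c d : R} (k : R)
    (h : d * a - b * c = 1) : (k * c + 1) * b - (k * a + 1) * d = b - d - k := by
  linear_combination -k * h

theorem berge_arithmetic_general (a b c d k m ω : ℤ)
    (hc : 0 < c)
    (h1 : d * a - b * c = 1)
    (h2 : c + d = m + 1)
    (h3 : a + b = ω + 1)
    (h4 : k * c = m)
    (h5 : k * a = ω - 1)
    (h6 : (m + 1) * b - ω * d = 1) :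
    a = 3 ∧ b = 5 ∧ c = 1 ∧ d = 2 ∧ k = 2 ∧ m = 2 ∧ ω = 7 := by
  have hbd : b - d = k + 1 := by
    linear_combination h6 + b * h4 - d * h5 - det_smul_add_one_of_det_eq_one k h1
  have hd : d = (k - 1) * c + 1 := by linear_combination h2 - h4
  have hb : b = (k - 1) * a + 2 := by linear_combination h3 - h5
  have ha : a = 2 * c + 1 := by linear_combination h1 - a * hd + c * hb
  have hkc : (k - 1) * c = 1 := by linear_combination hbd - hb + hd - (k - 1) * ha
  obtain rfl : c = 1 := Int.eq_one_of_mul_eq_one_left hc.le hkc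
  obtain rfl : k = 2 := by linarith
  subst ha hd hb
  omega

/-- The concluding arithmetic of the Berge-manifold
characterization: positive integers satisfying the listed relations must be
`a = 3`, `b = 5`, `c = 1`, `d = 2`, `k = 2`, `m = 2`, `ω = 7`. -/
theorem berge_arithmetic (a b c d k m ω : ℤ)
    (ha : 0 < a) (hb : 0 < b) (hc : 0 < c) (hd : 0 < d)
    (hk : 0 < k) (hm : 0 < m) (hω : 0 < ω)
    (h1 : d * a - b * c = 1)
    (h2 : c + d = m + 1)
    (h3 : a + b = ω + 1)
    (h4 : k * c = m)
    (h5 : k * a = ω - 1)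
    (h6 : (m + 1) * b - ω * d = 1) :
    a = 3 ∧ b = 5 ∧ c = 1 ∧ d = 2 ∧ k = 2 ∧ m = 2 ∧ ω = 7 :=
  berge_arithmetic_general a b c d k m ω hc h1 h2 h3 h4 h5 h6
end

section
/- Let n ≥ 1 and let b₁, …, bₙ and c₁, …, cₙ be positive integers. Define functions a, m : {1, …, 2n+1} → ℤ by a(1) = m(1) = 0 and, for each k = 1, …, n: a(2k) = a(2k−1) + bₖ, a(2k+1) = a(2k) + cₖ, m(2k) = m(2k−1) + 1, and m(2k+1) = m(2k) + 2cₖ − 1. Suppose i, j ∈ {1, …, 2n+1} and n_w, n_z are nonnegative integers, not both zero, such that a(i) − a(j) = n_z − n_w and m(i) − m(j) = 1 − 2n_w. Then either j = i + 1 and n_z = 0, or j = i − 1 and n_w = 0. -/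
/-!
The Maslov grading `m` rises by at least one at every step of the chain, and so does `2a - m`
(by `2bₖ - 1` resp. `1`). Hence along the chain `m` and `2a - m` both grow at least as fast as the
index. From `xᵢ` to `xⱼ`, `m` and `2a - m` drop by `1 - 2n_w` and `2n_z - 1`. If `i < j`,
the drop `2n_z - 1` of `2a - m` is at most `i - j < 0`, forcing `n_z = 0` and `j = i + 1`; if `j < i`,
the drop `1 - 2n_w` of `m` is at least `i - j > 0`, forcing `n_w = 0` and `j = i - 1`; `i = j`
contradicts parity.
-/

lemma Int.sub_le_sub_of_le_add_one {f : ℤ → ℤ} {lo hi : ℤ}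
    (hf : ∀ t, lo ≤ t → t < hi → f t + 1 ≤ f (t + 1)) {p q : ℤ}
    (hp : lo ≤ p) (hpq : p ≤ q) (hq : q ≤ hi) : q - p ≤ f q - f p := by
  have hmono : MonotoneOn (fun t => f t - t) (Set.Icc lo hi) := by
    refine monotoneOn_of_le_add_one Set.ordConnected_Icc fun t _ ht ht' => ?_
    have := hf t ht.1 (by linarith [ht'.2])
    linarith
  have := hmono ⟨hp, hpq.trans hq⟩ ⟨hp.trans hpq, hq⟩ hpq
  linarith

lemma Int.sub_le_sub_of_chain {f : ℤ → ℤ} {n : ℤ}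
    (hodd : ∀ k, 1 ≤ k → k ≤ n → f (2 * k - 1) + 1 ≤ f (2 * k))
    (heven : ∀ k, 1 ≤ k → k ≤ n → f (2 * k) + 1 ≤ f (2 * k + 1)) {p q : ℤ}
    (hp : 1 ≤ p) (hpq : p ≤ q) (hq : q ≤ 2 * n + 1) : q - p ≤ f q - f p := by
  refine Int.sub_le_sub_of_le_add_one (fun t ht1 ht2 => ?_) hp hpq hq
  obtain ⟨k, rfl | rfl⟩ := Int.even_or_odd' t
  · exact heven k (by omega) (by omega)
  · have := hodd (k + 1) (by omega) (by omega)
    rwa [show 2 * (k + 1) - 1 = 2 * k + 1 by ring, show 2 * (k + 1) = 2 * k + 1 + 1 by ring]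
      at this

theorem positive_chain_grading_constraint_general (n : ℤ)
    (b c : ℤ → ℤ) (hb : ∀ k, 1 ≤ k → k ≤ n → 0 < b k)
    (hc : ∀ k, 1 ≤ k → k ≤ n → 0 < c k)
    (a m : ℤ → ℤ)
    (haeven : ∀ k, 1 ≤ k → k ≤ n → a (2 * k) = a (2 * k - 1) + b k)
    (haodd : ∀ k, 1 ≤ k → k ≤ n → a (2 * k + 1) = a (2 * k) + c k)
    (hmeven : ∀ k, 1 ≤ k → k ≤ n → m (2 * k) = m (2 * k - 1) + 1)
    (hmodd : ∀ k, 1 ≤ k → k ≤ n → m (2 * k + 1) = m (2 * k) + 2 * c k - 1)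
    (i j : ℤ) (hi1 : 1 ≤ i) (hi2 : i ≤ 2 * n + 1) (hj1 : 1 ≤ j) (hj2 : j ≤ 2 * n + 1)
    (nw nz : ℤ) (hnw : 0 ≤ nw) (hnz : 0 ≤ nz)
    (hA : a i - a j = nz - nw)
    (hM : m i - m j = 1 - 2 * nw) :
    (j = i + 1 ∧ nz = 0) ∨ (j = i - 1 ∧ nw = 0) := by
  have hm {p q : ℤ} (hp : 1 ≤ p) (hpq : p ≤ q) (hq : q ≤ 2 * n + 1) :
      q - p ≤ m q - m p :=
    Int.sub_le_sub_of_chain (f := m)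
      (fun k hk1 hk2 => (hmeven k hk1 hk2).ge)
      (fun k hk1 hk2 => by linarith [hmodd k hk1 hk2, hc k hk1 hk2]) hp hpq hq
  have hg {p q : ℤ} (hp : 1 ≤ p) (hpq : p ≤ q) (hq : q ≤ 2 * n + 1) :
      q - p ≤ (2 * a q - m q) - (2 * a p - m p) :=
    Int.sub_le_sub_of_chain (f := fun t => 2 * a t - m t)
      (fun k hk1 hk2 => by linarith [haeven k hk1 hk2, hmeven k hk1 hk2, hb k hk1 hk2])
      (fun k hk1 hk2 => by linarith [haodd k hk1 hk2, hmodd k hk1 hk2]) hp hpq hq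
  rcases lt_trichotomy i j with hij | rfl | hji
  · have := hm hi1 hij.le hj2
    have := hg hi1 hij.le hj2
    omega
  · omega
  · have := hm hj1 hji.le hi2
    have := hg hj1 hji.le hi2
    omega

/-- The arithmetic core of Lemma 2.4. With Alexander and Maslov
gradings `a, m` of a positive chain determined by the positive integers
`b k, c k`, the grading constraints of a Maslov index one disk force
`j = i + 1` with `n_z = 0` or `j = i − 1` with `n_w = 0`. -/
theorem positive_chain_grading_constraint (n : ℤ) (hn : 1 ≤ n)
    (b c : ℤ → ℤ) (hb : ∀ k, 1 ≤ k → k ≤ n → 0 < b k)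
    (hc : ∀ k, 1 ≤ k → k ≤ n → 0 < c k)
    (a m : ℤ → ℤ) (ha1 : a 1 = 0) (hm1 : m 1 = 0)
    (haeven : ∀ k, 1 ≤ k → k ≤ n → a (2 * k) = a (2 * k - 1) + b k)
    (haodd : ∀ k, 1 ≤ k → k ≤ n → a (2 * k + 1) = a (2 * k) + c k)
    (hmeven : ∀ k, 1 ≤ k → k ≤ n → m (2 * k) = m (2 * k - 1) + 1)
    (hmodd : ∀ k, 1 ≤ k → k ≤ n → m (2 * k + 1) = m (2 * k) + 2 * c k - 1)
    (i j : ℤ) (hi1 : 1 ≤ i) (hi2 : i ≤ 2 * n + 1) (hj1 : 1 ≤ j) (hj2 : j ≤ 2 * n + 1)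
    (nw nz : ℤ) (hnw : 0 ≤ nw) (hnz : 0 ≤ nz) (hne : ¬(nw = 0 ∧ nz = 0))
    (hA : a i - a j = nz - nw)
    (hM : m i - m j = 1 - 2 * nw) :
    (j = i + 1 ∧ nz = 0) ∨ (j = i - 1 ∧ nw = 0) :=
  positive_chain_grading_constraint_general n b c hb hc a m haeven haodd hmeven hmodd i j hi1 hi2
    hj1 hj2 nw nz hnw hnz hA hM
end
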